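/- arXiv:1803.01408 — 2 statements merged into one kernel-verified Lean document; each statement's English description precedes it below -/
import Mathlib

section
/- Let Λ be a complete Noetherian local ring and A a complete Noetherian local Λ-algebra with the same residue field, and let m ∈ ℕ. If the completed tensor product A ⊗̂_Λ Λ[[x]] is isomorphic as a Λ-algebra to Λ[[x_1,…,x_m]], then A is isomorphic as a Λ-algebra to Λ[[x_1,…,x_{m−1}]]. -/
/-!
Let `ψ : A⟦X⟧ ≃ₐ[Λ] Λ⟦x_1, …, x_m⟧` and `f = ψ X`. If no linear coefficient of `f` were a unit,
`f` would lie in `m_Λ Λ⟦x⟧ + m²`, which `ψ⁻¹` maps into `m_A A⟦X⟧ + m²`, an ideal not containing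
`X`; so the coefficient of some `x_i` is a unit. Let `c` be the constant coefficient of `f` and
`a` its image in `A`. If `g` is a power series over a ring `R`, complete for an ideal containing
`g(0)`, and `g'(0)` is a unit, Weierstrass division by `g` only leaves constant remainders, so
`R ≃ R⟦T⟧ ⧸ (g)`. Applied to `X - a` over `A` and to `f - c` over `Λ⟦x_j : j ≠ i⟧`, with the
ideal of the variables, it gives `A ≃ A⟦X⟧ ⧸ (X - a) ≃ Λ⟦x⟧ ⧸ (f - c) ≃ Λ⟦x_j : j ≠ i⟧`.
-/

open IsLocalRing

theorem Finsupp.exists_eq_single_of_degree_eq_one {σ : Type*} {d : σ →₀ ℕ} (h : d.degree = 1) :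
    ∃ i, d = single i 1 := by
  classical
  obtain ⟨i, hi⟩ := Multiset.card_eq_one.mp (d.card_toMultiset.trans h)
  exact ⟨i, by rw [← d.toMultiset_toFinsupp, hi, Multiset.toFinsupp_singleton]⟩

namespace MvPowerSeries

section Finite

variable {σ R : Type*} [CommRing R] [Finite σ]

theorem map_toAdicCompletionAlgEquiv_span_range_X :
    (Ideal.span (Set.range X)).map (toAdicCompletionAlgEquiv σ R).toRingEquiv =
      (MvPolynomial.idealOfVars σ R).map (algebraMap _ _) := by
  rw [Ideal.map_span, Ideal.map_span, ← Set.range_comp, ← Set.range_comp]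
  congr 2
  ext i : 1
  simp [AdicCompletion.algebraMap_apply, ← MvPolynomial.coe_X, toAdicCompletion_coe]

theorem mem_span_range_X_pow_iff {f : MvPowerSeries σ R} {n : ℕ} :
    f ∈ Ideal.span (Set.range X) ^ n ↔ ∀ d : σ →₀ ℕ, d.degree < n → coeff d f = 0 := by
  -- Read membership off the `(X)`-adic completion of `R[σ]`, whose level `n` is `truncTotal n`.
  set Φ := (toAdicCompletionAlgEquiv σ R).toRingEquiv
  rw [← Ideal.apply_mem_of_equiv_iff (f := Φ), Ideal.map_pow,
    map_toAdicCompletionAlgEquiv_span_range_X, ← Ideal.map_pow]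
  change Φ f ∈ ((MvPolynomial.idealOfVars σ R ^ n).map _).restrictScalars (MvPolynomial σ R) ↔ _
  rw [← Ideal.smul_top_eq_map,
    AdicCompletion.pow_smul_top_eq_ker_eval (MvPolynomial.idealOfVars_fg σ R), LinearMap.mem_ker,
    AdicCompletion.eval_apply]
  change (toAdicCompletion σ R f).val n = 0 ↔ _
  rw [toAdicCompletion_apply_eq_mk_truncTotal, Ideal.Quotient.eq_zero_iff_mem, smul_eq_mul,
    Ideal.mul_top, MvPolynomial.mem_pow_idealOfVars_iff']
  exact forall_congr' fun d => imp_congr_right fun hd => by rw [coeff_truncTotal _ hd]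

theorem mem_map_C_sup_span_range_X_pow {J : Ideal R} {n : ℕ} {f : MvPowerSeries σ R}
    (hf : ∀ d : σ →₀ ℕ, d.degree < n → coeff d f ∈ J) :
    f ∈ J.map C ⊔ Ideal.span (Set.range X) ^ n := by
  set p := truncTotal n f
  rw [← add_sub_cancel (p : MvPowerSeries σ R) f]
  refine Submodule.add_mem_sup ?_ ?_
  · rw [p.as_sum, ← MvPolynomial.coeToMvPowerSeries.ringHom_apply, map_sum]
    refine Ideal.sum_mem _ fun d _ => ?_
    rw [MvPolynomial.coeToMvPowerSeries.ringHom_apply, MvPolynomial.coe_monomial,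
      ← mul_one (MvPolynomial.coeff d p), ← smul_eq_mul, map_smul, smul_eq_C_mul]
    refine Ideal.mul_mem_right _ _ (Ideal.mem_map_of_mem _ ?_)
    rw [coeff_truncTotal_eq_ite]
    split_ifs with hd
    · exact hf d hd
    · exact J.zero_mem
  · rw [mem_span_range_X_pow_iff]
    intro d hd
    rw [map_sub, MvPolynomial.coeff_coe, coeff_truncTotal _ hd, sub_self]

end Finite

theorem span_range_X_le_maximalIdeal {σ R : Type*} [CommRing R] [IsLocalRing R] :
    Ideal.span (Set.range X) ≤ maximalIdeal (MvPowerSeries σ R) := by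
  rw [Ideal.span_le]
  rintro _ ⟨i, rfl⟩
  simp [isUnit_iff_constantCoeff]

end MvPowerSeries

namespace PowerSeries

variable {A : Type*} [CommRing A] {I : Ideal A} {g : A⟦X⟧}

theorem order_map_mk_eq_one (hI : I ≠ ⊤) (h0 : constantCoeff g ∈ I) (h1 : IsUnit (coeff 1 g)) :
    (g.map (Ideal.Quotient.mk I)).order = 1 := by
  have : Nontrivial (A ⧸ I) := Ideal.Quotient.nontrivial_iff.mpr hI
  rw [← Nat.cast_one, order_eq_nat]
  refine ⟨by simpa using (h1.map (Ideal.Quotient.mk I)).ne_zero, fun i hi => ?_⟩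
  obtain rfl : i = 0 := by omega
  simpa [Ideal.Quotient.eq_zero_iff_mem] using h0

theorem bijective_algebraMap_quotient_span_of_isUnit_coeff_one [IsAdicComplete I A]
    (h0 : constantCoeff g ∈ I) (h1 : IsUnit (coeff 1 g)) :
    Function.Bijective (algebraMap A (A⟦X⟧ ⧸ Ideal.span {g})) := by
  change Function.Bijective ((Ideal.Quotient.mk (Ideal.span {g})).comp C)
  rcases eq_or_ne I ⊤ with rfl | hI
  · have : Subsingleton A := IsAdicComplete.subsingleton (M := A) ‹_›
    exact ⟨Function.injective_of_subsingleton _, fun x => ⟨0, Subsingleton.elim _ _⟩⟩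
  have hord := order_map_mk_eq_one hI h0 h1
  have H : g.IsWeierstrassDivisorAt I := by rwa [IsWeierstrassDivisorAt, hord]
  have hdeg : ∀ r : Polynomial A, r.degree ≤ 0 →
      r.degree < ((g.map (Ideal.Quotient.mk I)).order.toNat : WithBot ℕ) := by
    intro r hr
    rw [hord]
    exact hr.trans_lt (by decide)
  constructor
  · rw [injective_iff_map_eq_zero]
    intro a ha
    obtain ⟨q, hq⟩ := Ideal.mem_span_singleton.mp (Ideal.Quotient.eq_zero_iff_mem.mp ha)
    -- `g * q + 0` and `g * 0 + a` are both Weierstrass divisions of `C a` by `g`.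
    have := (H.eq_of_mul_add_eq_mul_add (r := 0) (r' := Polynomial.C a) (q := q) (q' := 0)
      (hdeg _ (by simp)) (hdeg _ Polynomial.degree_C_le) (by simpa using hq.symm)).2
    simpa using this.symm
  · intro x
    obtain ⟨f, rfl⟩ := Ideal.Quotient.mk_surjective x
    obtain ⟨hr, hf⟩ := H.isWeierstrassDivisionAt_div_mod f
    rw [hord] at hr
    rw [Polynomial.eq_C_of_degree_le_zero (Order.le_of_lt_succ hr), Polynomial.coe_C] at hf
    refine ⟨(H.mod f).coeff 0, Ideal.Quotient.eq.mpr (Ideal.mem_span_singleton.mpr ⟨-H.div f, ?_⟩)⟩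
    linear_combination -hf

noncomputable def algEquivQuotientSpanOfIsUnitCoeffOne [IsAdicComplete I A]
    (h0 : constantCoeff g ∈ I) (h1 : IsUnit (coeff 1 g)) : A ≃ₐ[A] A⟦X⟧ ⧸ Ideal.span {g} :=
  AlgEquiv.ofBijective (Algebra.ofId _ _)
    (bijective_algebraMap_quotient_span_of_isUnit_coeff_one h0 h1)

end PowerSeries

namespace MvPowerSeries

variable {σ R : Type*} [CommRing R] {g : MvPowerSeries (Option σ) R}

theorem constantCoeff_optionEquivLeft_mem_span_range_X [Finite σ] (h0 : constantCoeff g = 0) :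
    PowerSeries.constantCoeff (optionEquivLeft σ R g) ∈ Ideal.span (Set.range X) := by
  rw [← pow_one (Ideal.span _), mem_span_range_X_pow_iff]
  intro d hd
  rw [(Finsupp.degree_eq_zero_iff d).mp (Nat.lt_one_iff.mp hd),
    ← PowerSeries.coeff_zero_eq_constantCoeff_apply, coeff_coeff_optionEquivLeft]
  simpa using h0

theorem isUnit_coeff_one_optionEquivLeft (h1 : IsUnit (coeff (Finsupp.single none 1) g)) :
    IsUnit (PowerSeries.coeff 1 (optionEquivLeft σ R g)) := by
  rw [isUnit_iff_constantCoeff, ← coeff_zero_eq_constantCoeff_apply, coeff_coeff_optionEquivLeft]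
  convert h1
  ext (_ | i) <;> simp

noncomputable def algEquivQuotientSpanOfIsUnitCoeffSingleNone [Finite σ]
    (h0 : constantCoeff g = 0) (h1 : IsUnit (coeff (Finsupp.single none 1) g)) :
    MvPowerSeries σ R ≃ₐ[R] MvPowerSeries (Option σ) R ⧸ Ideal.span {g} :=
  ((PowerSeries.algEquivQuotientSpanOfIsUnitCoeffOne
      (constantCoeff_optionEquivLeft_mem_span_range_X h0)
      (isUnit_coeff_one_optionEquivLeft h1)).restrictScalars R).trans
    (Ideal.quotientEquivAlg _ _ (optionEquivLeft σ R).symm (by simp [Ideal.map_span]))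

end MvPowerSeries

namespace PowerSeries

variable {A : Type*} [CommRing A] [IsLocalRing A]

theorem maximalIdeal_le_comap_map_residue_span_X :
    maximalIdeal A⟦X⟧ ≤ (Ideal.span {X}).comap (map (residue A)) := by
  intro g hg
  rw [Ideal.mem_comap, Ideal.mem_span_singleton, X_dvd_iff, ← coeff_zero_eq_constantCoeff_apply,
    coeff_map, coeff_zero_eq_constantCoeff_apply, residue_eq_zero_iff]
  exact fun h => hg (isUnit_iff_constantCoeff.mpr h)

theorem X_notMem_map_C_sup_maximalIdeal_sq :
    X ∉ (maximalIdeal A).map C ⊔ maximalIdeal A⟦X⟧ ^ 2 := by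
  set π := (Ideal.Quotient.mk (Ideal.span {(X : (ResidueField A)⟦X⟧) ^ 2})).comp (map (residue A))
  have hker : (maximalIdeal A).map C ⊔ maximalIdeal A⟦X⟧ ^ 2 ≤ RingHom.ker π := by
    rw [← RingHom.comap_ker, Ideal.mk_ker]
    refine sup_le ?_ ?_
    · rw [Ideal.map_le_iff_le_comap]
      intro a ha
      simp [(residue_eq_zero_iff a).mpr ha]
    · calc maximalIdeal A⟦X⟧ ^ 2 ≤ ((Ideal.span {X}).comap (map (residue A))) ^ 2 :=
            Ideal.pow_right_mono maximalIdeal_le_comap_map_residue_span_X 2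
        _ ≤ _ := by rw [← Ideal.span_singleton_pow]; exact Ideal.le_comap_pow _ 2
  intro hX
  have := hker hX
  rw [RingHom.mem_ker, RingHom.comp_apply, map_X, Ideal.Quotient.eq_zero_iff_mem,
    Ideal.mem_span_singleton, X_pow_dvd_iff] at this
  simpa using this 1 one_lt_two

end PowerSeries

theorem map_algEquiv_map_C_sup_maximalIdeal_sq_le {Λ A σ : Type*} [CommRing Λ] [IsLocalRing Λ]
    [CommRing A] [IsLocalRing A] [Algebra Λ A] [IsLocalHom (algebraMap Λ A)]
    (φ : MvPowerSeries σ Λ ≃ₐ[Λ] PowerSeries A) :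
    Ideal.map (φ : MvPowerSeries σ Λ →+* PowerSeries A)
        ((maximalIdeal Λ).map MvPowerSeries.C ⊔ maximalIdeal (MvPowerSeries σ Λ) ^ 2) ≤
      (maximalIdeal A).map PowerSeries.C ⊔ maximalIdeal (PowerSeries A) ^ 2 := by
  rw [Ideal.map_sup, Ideal.map_pow, Ideal.map_map]
  refine sup_le_sup ?_ (Ideal.pow_right_mono (map_maximalIdeal_le _) 2)
  have hC : (φ : MvPowerSeries σ Λ →+* PowerSeries A).comp MvPowerSeries.C =
      PowerSeries.C.comp (algebraMap Λ A) := by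
    ext c
    simp [MvPowerSeries.c_eq_algebraMap, ← PowerSeries.algebraMap_apply]
  rw [hC, ← Ideal.map_map]
  exact Ideal.map_mono (map_maximalIdeal_le _)

theorem exists_isUnit_coeff_single_algEquiv_X {Λ A σ : Type*} [CommRing Λ] [IsLocalRing Λ]
    [CommRing A] [IsLocalRing A] [Algebra Λ A] [IsLocalHom (algebraMap Λ A)] [Finite σ]
    (ψ : PowerSeries A ≃ₐ[Λ] MvPowerSeries σ Λ) :
    ∃ i, IsUnit (MvPowerSeries.coeff (Finsupp.single i 1) (ψ PowerSeries.X)) := by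
  by_contra! h
  have hX : ψ PowerSeries.X ∈ maximalIdeal _ := fun hu => by
    simpa [PowerSeries.isUnit_iff_constantCoeff] using hu.map ψ.symm
  have hmem : ψ PowerSeries.X ∈ (maximalIdeal Λ).map MvPowerSeries.C ⊔
      Ideal.span (Set.range MvPowerSeries.X) ^ 2 := by
    refine MvPowerSeries.mem_map_C_sup_span_range_X_pow fun d hd => ?_
    obtain hd0 | hd1 : d.degree = 0 ∨ d.degree = 1 := by omega
    · rw [(Finsupp.degree_eq_zero_iff d).mp hd0, MvPowerSeries.coeff_zero_eq_constantCoeff_apply]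
      exact fun hu => hX (MvPowerSeries.isUnit_iff_constantCoeff.mpr hu)
    · obtain ⟨i, rfl⟩ := Finsupp.exists_eq_single_of_degree_eq_one hd1
      exact h i
  refine PowerSeries.X_notMem_map_C_sup_maximalIdeal_sq
    (map_algEquiv_map_C_sup_maximalIdeal_sq_le ψ.symm ?_)
  simpa using Ideal.mem_map_of_mem (ψ.symm : MvPowerSeries σ Λ →+* PowerSeries A)
    (sup_le_sup_left (Ideal.pow_right_mono MvPowerSeries.span_range_X_le_maximalIdeal 2) _ hmem)

theorem nonempty_algEquiv_of_powerSeries_algEquiv_option {Λ A σ : Type*} [CommRing Λ]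
    [Nontrivial Λ] [CommRing A] [IsLocalRing A] [IsAdicComplete (maximalIdeal A) A] [Algebra Λ A]
    [Finite σ] (ψ : PowerSeries A ≃ₐ[Λ] MvPowerSeries (Option σ) Λ)
    (hψ : IsUnit (MvPowerSeries.coeff (Finsupp.single none 1) (ψ PowerSeries.X))) :
    Nonempty (A ≃ₐ[Λ] MvPowerSeries σ Λ) := by
  set c := MvPowerSeries.constantCoeff (ψ PowerSeries.X)
  set a := algebraMap Λ A c
  have hg : ψ (PowerSeries.X - PowerSeries.C a) = ψ PowerSeries.X - MvPowerSeries.C c := by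
    rw [map_sub, ← PowerSeries.algebraMap_apply, ψ.commutes, MvPowerSeries.algebraMap_apply,
      Algebra.algebraMap_self, RingHom.id_apply]
  have h0 : MvPowerSeries.constantCoeff (ψ PowerSeries.X - MvPowerSeries.C c) = 0 := by
    simp [c]
  have h1 : IsUnit (MvPowerSeries.coeff (Finsupp.single none 1)
      (ψ PowerSeries.X - MvPowerSeries.C c)) := by
    rwa [map_sub, MvPowerSeries.coeff_C_of_ne_zero (by simp), sub_zero]
  have ha : PowerSeries.constantCoeff (PowerSeries.X - PowerSeries.C a) ∈ maximalIdeal A := by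
    intro hu
    have := (PowerSeries.isUnit_iff_constantCoeff.mpr hu).map ψ
    rw [hg, MvPowerSeries.isUnit_iff_constantCoeff, h0] at this
    exact not_isUnit_zero this
  exact ⟨((PowerSeries.algEquivQuotientSpanOfIsUnitCoeffOne ha (by simp)).restrictScalars Λ).trans
    ((Ideal.quotientEquivAlg _ _ ψ (by rw [Ideal.map_span, Set.image_singleton, ← hg]; rfl)).trans
      (MvPowerSeries.algEquivQuotientSpanOfIsUnitCoeffSingleNone h0 h1).symm)⟩

theorem stmt4_general (Λ A : Type) [CommRing Λ] [IsLocalRing Λ]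
    [CommRing A] [IsLocalRing A] [IsAdicComplete (maximalIdeal A) A]
    [Algebra Λ A] [IsLocalHom (algebraMap Λ A)]
    (m : ℕ)
    (h : Nonempty (PowerSeries A ≃ₐ[Λ] MvPowerSeries (Fin m) Λ)) :
    Nonempty (A ≃ₐ[Λ] MvPowerSeries (Fin (m - 1)) Λ) := by
  obtain ⟨ψ⟩ := h
  obtain ⟨i, hi⟩ := exists_isUnit_coeff_single_algEquiv_X ψ
  obtain ⟨n, rfl⟩ := Nat.exists_eq_add_one.mpr (Fin.pos i)
  refine nonempty_algEquiv_of_powerSeries_algEquiv_option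
    (ψ.trans (MvPowerSeries.renameEquiv Λ (finSuccEquiv' i))) ?_
  have hsingle : Finsupp.single none 1 =
      (Finsupp.single i 1).embDomain (finSuccEquiv' i).toEmbedding := by
    simp
  rw [AlgEquiv.trans_apply, hsingle]
  convert hi using 1
  exact MvPowerSeries.coeff_embDomain_rename (finSuccEquiv' i).toEmbedding (ψ PowerSeries.X) _

/-- Let `Λ` be a complete Noetherian local ring and `A` a complete
Noetherian local `Λ`-algebra with the same residue field.  Since
`A ⊗̂_Λ Λ[[x]] ≅ A[[x]]`, the statement says: if `A[[x]]` is isomorphic as a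
`Λ`-algebra to `Λ[[x_1,…,x_m]]`, then `A ≅ Λ[[x_1,…,x_{m−1}]]`. -/
theorem stmt4 (Λ A : Type) [CommRing Λ] [IsLocalRing Λ] [IsNoetherianRing Λ]
    [IsAdicComplete (maximalIdeal Λ) Λ]
    [CommRing A] [IsLocalRing A] [IsNoetherianRing A] [IsAdicComplete (maximalIdeal A) A]
    [Algebra Λ A] [IsLocalHom (algebraMap Λ A)]
    (m : ℕ)
    (h : Nonempty (PowerSeries A ≃ₐ[Λ] MvPowerSeries (Fin m) Λ)) :
    Nonempty (A ≃ₐ[Λ] MvPowerSeries (Fin (m - 1)) Λ) :=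
  stmt4_general Λ A m h
end

section
/- Let A be an integral domain which is a complete Noetherian local ring with finite residue field k of characteristic ℓ, with residue map π : A → k. Let q be a prime power coprime to ℓ, and let X ∈ GL_n(A) be a matrix such that (i) there exists φ ∈ GL_n(A) with φXφ^{−1} = X^q, and (ii) the reduction of X modulo the maximal ideal is unipotent (all eigenvalues equal to 1 in k̄). If ℓ ≥ q^{n!}, then the characteristic polynomial of X is (T − 1)^n. -/
/-!
Over an algebraic closure `K` of `Frac A`, the relation `φ X φ⁻¹ = X ^ q` and the spectral
mapping theorem show that `t ↦ t ^ q` maps the spectrum of `X` (at most `n` eigenvalues, none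
zero) onto itself, hence permutes it, so every eigenvalue is an `N`-th root of unity for
`N = q ^ n! - 1`. Thus `charpoly X ∣ (T ^ N - 1) ^ n`, already in `A[T]` since the charpoly is
monic. Writing `(T ^ N - 1) ^ n = charpoly X * h` and reducing modulo the maximal ideal gives
`h̄ = (1 + T + ⋯ + T ^ (N - 1)) ^ n`, so `h(1) ↦ N ^ n ≠ 0` in `k` because `0 < N < ℓ`. Hence the
prime `T - 1` does not divide `h`, so `(T - 1) ^ n ∣ charpoly X`, and degrees force equality.
-/

open IsLocalRing

section

open Polynomial
open scoped Nat

theorem Set.iterate_factorial_eq_self_of_image_eq {α : Type*} {f : α → α} {s : Set α}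
    [Finite s] (hf : f '' s = s) {n : ℕ} (hn : Nat.card s ≤ n) {x : α} (hx : x ∈ s) :
    f^[n !] x = x := by
  have hmaps : Set.MapsTo f s s := fun y hy => hf ▸ Set.mem_image_of_mem f hy
  have hsurj : Function.Surjective hmaps.restrict := by
    rintro ⟨y, hy⟩
    rw [← hf] at hy
    obtain ⟨z, hz, rfl⟩ := hy
    exact ⟨⟨z, hz⟩, rfl⟩
  let σ : Equiv.Perm s :=
    Equiv.ofBijective _ ⟨Finite.injective_iff_surjective.mpr hsurj, hsurj⟩
  have hσ : σ ^ n ! = 1 := by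
    obtain ⟨c, hc⟩ := Nat.factorial_dvd_factorial hn
    rw [hc, pow_mul, ← Nat.card_perm, pow_card_eq_one', one_pow]
  calc f^[n !] x = ((σ ^ n !) ⟨x, hx⟩ : α) := (hmaps.coe_iterate_restrict ⟨x, hx⟩ n !).symm
    _ = x := by rw [hσ]; rfl

theorem Polynomial.dvd_X_pow_sub_one_pow_natDegree {K : Type*} [Field K] {p : K[X]}
    (hmonic : p.Monic) (hsplit : p.Splits) {N : ℕ} (hroots : ∀ t ∈ p.roots, t ^ N = 1) :
    p ∣ (X ^ N - 1) ^ p.natDegree :=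
  calc p = (p.roots.map (X - C ·)).prod := hsplit.eq_prod_roots_of_monic hmonic
    _ ∣ (p.roots.map fun _ => (X ^ N - 1 : K[X])).prod :=
        Multiset.prod_dvd_prod_of_dvd _ _ fun t ht => dvd_iff_isRoot.mpr <| by
          simp [hroots t ht]
    _ = (X ^ N - 1) ^ p.natDegree := by
        rw [Multiset.map_const', Multiset.prod_replicate, hsplit.natDegree_eq_card_roots]

theorem Polynomial.Monic.eq_X_sub_one_pow_of_dvd_of_map_eq {A k : Type*} [CommRing A]
    [IsDomain A] [CommRing k] [IsDomain k] {π : A →+* k} {p : A[X]} (hp : p.Monic) {n N : ℕ}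
    (hdvd : p ∣ (X ^ N - 1) ^ n) (hred : p.map π = (X - 1) ^ n) (hN : (N : k) ≠ 0) :
    p = (X - 1) ^ n := by
  obtain ⟨h, hph⟩ := hdvd
  set G : A[X] := ∑ i ∈ Finset.range N, X ^ i
  have hG : X ^ N - 1 = G * (X - 1) := (geom_sum_mul X N).symm
  have hGred : h.map π = (G ^ n).map π := by
    have hmap : (X - 1) ^ n * (G ^ n).map π = (X - 1) ^ n * h.map π := by
      have := congrArg (Polynomial.map π) hph
      rwa [hG, mul_pow, Polynomial.map_mul, Polynomial.map_mul, hred, mul_comm,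
        Polynomial.map_pow, Polynomial.map_sub, map_X, Polynomial.map_one] at this
    exact (mul_left_cancel₀ (pow_ne_zero n (by simpa using X_sub_C_ne_zero (1 : k))) hmap).symm
  have hh : ¬ (X - C 1) ∣ h := by
    have hval : (h.map π).eval 1 = (N : k) ^ n := by simp [hGred, G, eval_geom_sum]
    rw [dvd_iff_isRoot, IsRoot.def]
    intro hroot
    rw [eval_one_map, hroot, map_zero] at hval
    exact pow_ne_zero n hN hval.symm
  have hdvd : (X - C 1) ^ n ∣ p * h := by
    rw [← hph, hG]
    exact pow_dvd_pow_of_dvd (dvd_mul_left _ _) n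
  refine eq_of_monic_of_dvd_of_natDegree_le ((monic_X_sub_C 1).pow n) hp ?_ ?_
  · simpa using (prime_X_sub_C (1 : A)).pow_dvd_of_dvd_mul_right n hh hdvd
  · rw [← hp.natDegree_map π, hred, ← C_1, ← C_1, Polynomial.natDegree_pow,
      Polynomial.natDegree_pow, natDegree_X_sub_C, natDegree_X_sub_C]

theorem Matrix.natCard_spectrum_le_card {K ι : Type*} [Field K] [Fintype ι] [DecidableEq ι]
    (M : Matrix ι ι K) : Nat.card (spectrum K M) ≤ Fintype.card ι := by
  classical
  have hspec : spectrum K M = M.charpoly.roots.toFinset := by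
    ext t
    simp [Matrix.mem_spectrum_iff_isRoot_charpoly, (Matrix.charpoly_monic M).ne_zero]
  rw [hspec, Nat.card_coe_set_eq, Set.ncard_coe_finset]
  calc M.charpoly.roots.toFinset.card ≤ Multiset.card M.charpoly.roots :=
        Multiset.toFinset_card_le _
    _ ≤ M.charpoly.natDegree := card_roots' _
    _ = Fintype.card ι := M.charpoly_natDegree_eq_dim

theorem Matrix.pow_eq_one_of_mem_spectrum_of_conj_eq_pow {K ι : Type*} [Field K] [IsAlgClosed K]
    [Fintype ι] [DecidableEq ι] {M u : (Matrix ι ι K)ˣ} {q : ℕ} (hq : 0 < q)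
    (hconj : u * M * u⁻¹ = M ^ q) {t : K} (ht : t ∈ spectrum K (M : Matrix ι ι K)) :
    t ^ (q ^ (Fintype.card ι)! - 1) = 1 := by
  have hperm : (· ^ q) '' spectrum K (M : Matrix ι ι K) = spectrum K (M : Matrix ι ι K) := by
    rw [← spectrum.map_pow_of_pos _ hq, ← Units.val_pow_eq_pow_val, ← hconj, Units.val_mul,
      Units.val_mul, spectrum.units_conjugate]
  have hfix : t ^ q ^ (Fintype.card ι)! = t := by
    simpa only [pow_iterate] using
      Set.iterate_factorial_eq_self_of_image_eq hperm (Matrix.natCard_spectrum_le_card _) ht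
  have hne : t ≠ 0 := by
    rintro rfl
    exact spectrum.zero_notMem K M.isUnit ht
  rw [pow_sub₀ t hne (Nat.one_le_pow _ _ hq), pow_one, hfix, mul_inv_cancel₀ hne]

theorem Matrix.charpoly_dvd_X_pow_sub_one_pow_of_conj_eq_pow {A ι : Type*} [CommRing A]
    [IsDomain A] [Fintype ι] [DecidableEq ι] {M u : (Matrix ι ι A)ˣ} {q : ℕ} (hq : 0 < q)
    (hconj : u * M * u⁻¹ = M ^ q) :
    (M : Matrix ι ι A).charpoly ∣ (X ^ (q ^ (Fintype.card ι)! - 1) - 1) ^ Fintype.card ι := by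
  set K := AlgebraicClosure (FractionRing A)
  set j : A →+* K := (algebraMap (FractionRing A) K).comp (algebraMap A (FractionRing A))
  have hj : Function.Injective j :=
    (algebraMap (FractionRing A) K).injective.comp (IsFractionRing.injective A _)
  set embed : (Matrix ι ι A)ˣ →* (Matrix ι ι K)ˣ := Units.map j.mapMatrix.toMonoidHom
  have hconjK : embed u * embed M * (embed u)⁻¹ = embed M ^ q := by
    rw [← map_inv, ← map_mul, ← map_mul, ← map_pow, hconj]
  have hcharpoly : (embed M : Matrix ι ι K).charpoly = (M : Matrix ι ι A).charpoly.map j :=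
    Matrix.charpoly_map _ _
  have hroots : ∀ t ∈ (embed M : Matrix ι ι K).charpoly.roots,
      t ^ (q ^ (Fintype.card ι)! - 1) = 1 := fun t ht =>
    Matrix.pow_eq_one_of_mem_spectrum_of_conj_eq_pow hq hconjK <|
      Matrix.mem_spectrum_iff_isRoot_charpoly.mpr (isRoot_of_mem_roots ht)
  rw [← map_dvd_map j hj (Matrix.charpoly_monic _), ← hcharpoly, Polynomial.map_pow,
    Polynomial.map_sub, Polynomial.map_pow, map_X, Polynomial.map_one]
  simpa only [Matrix.charpoly_natDegree_eq_dim] using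
    dvd_X_pow_sub_one_pow_natDegree (Matrix.charpoly_monic _) (IsAlgClosed.splits _) hroots

end

theorem stmt8_general (A : Type) [CommRing A] [IsDomain A] [IsLocalRing A]
    (ℓ : ℕ) [CharP (ResidueField A) ℓ]
    (q n : ℕ) (hq : IsPrimePow q)
    (X φ : (Matrix (Fin n) (Fin n) A)ˣ)
    (hconj : φ * X * φ⁻¹ = X ^ q)
    (hunip : Matrix.charpoly ((X : Matrix (Fin n) (Fin n) A).map (residue A)) =
      (Polynomial.X - 1) ^ n)
    (hbig : q ^ Nat.factorial n ≤ ℓ) :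
    Matrix.charpoly (X : Matrix (Fin n) (Fin n) A) = (Polynomial.X - 1) ^ n := by
  have hN : ((q ^ Nat.factorial n - 1 : ℕ) : ResidueField A) ≠ 0 := by
    have hqpow : 1 < q ^ Nat.factorial n := Nat.one_lt_pow (Nat.factorial_ne_zero n) hq.one_lt
    rw [Ne, CharP.cast_eq_zero_iff (ResidueField A) ℓ]
    exact fun hdvd => absurd (Nat.le_of_dvd (by omega) hdvd) (by omega)
  have hdvd := Matrix.charpoly_dvd_X_pow_sub_one_pow_of_conj_eq_pow hq.pos hconj
  rw [Fintype.card_fin] at hdvd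
  refine (Matrix.charpoly_monic _).eq_X_sub_one_pow_of_dvd_of_map_eq (π := residue A) hdvd ?_ hN
  rwa [← Matrix.charpoly_map]

/-- Let `A` be an integral domain which is a complete Noetherian local ring
with finite residue field `k` of characteristic `ℓ`.  Let `q` be a prime power coprime
to `ℓ`, and `X ∈ GL_n(A)` such that (i) there is `φ ∈ GL_n(A)` with `φXφ⁻¹ = X^q`, and
(ii) the reduction of `X` mod the maximal ideal is unipotent (its characteristic
polynomial over `k` is `(T−1)^n`).  If `ℓ ≥ q^{n!}`, then `charpoly X = (T−1)^n`. -/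
theorem stmt8 (A : Type) [CommRing A] [IsDomain A] [IsLocalRing A] [IsNoetherianRing A]
    [IsAdicComplete (maximalIdeal A) A] [Finite (ResidueField A)]
    (ℓ : ℕ) (hℓ : ℓ.Prime) [CharP (ResidueField A) ℓ]
    (q n : ℕ) (hq : IsPrimePow q) (hcop : ¬ ℓ ∣ q)
    (X φ : (Matrix (Fin n) (Fin n) A)ˣ)
    (hconj : φ * X * φ⁻¹ = X ^ q)
    (hunip : Matrix.charpoly ((X : Matrix (Fin n) (Fin n) A).map (residue A)) =
      (Polynomial.X - 1) ^ n)
    (hbig : q ^ Nat.factorial n ≤ ℓ) :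
    Matrix.charpoly (X : Matrix (Fin n) (Fin n) A) = (Polynomial.X - 1) ^ n :=
  stmt8_general A ℓ q n hq X φ hconj hunip hbig
end
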